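/- Let K be a symmetric convex body in R^n and u a unit vector. For every z ∈ Ru, the hyperplane slice of the polar of the Steiner symmetral satisfies ((S_u K)^o - z) ∩ u^⊥ ⊇ ½[((K^o - z) ∩ u^⊥) + ((K^o + z) ∩ u^⊥)]. -/

import Mathlib

open MeasureTheory Set Pointwise
open scoped InnerProductSpace ENNReal

noncomputable section

/-- `ℝ^n` with the Euclidean structure. -/
abbrev E (n : ℕ) := EuclideanSpace ℝ (Fin n)

/-- The polar body `K° = {y : ∀ x ∈ K, ⟨x,y⟩ ≤ 1}`. -/
def polarBody {n : ℕ} (K : Set (E n)) : Set (E n) := {y | ∀ x ∈ K, ⟪x, y⟫_ℝ ≤ 1}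

/-- A set is unconditional if it is invariant under coordinate-wise sign changes. -/
def Uncond {n : ℕ} (K : Set (E n)) : Prop :=
  ∀ x ∈ K, ∀ ε : Fin n → ℝ, (∀ i, ε i = 1 ∨ ε i = -1) →
    (WithLp.toLp 2 (fun i => ε i * x i) : E n) ∈ K

/-- A convex body: compact, convex, with nonempty interior. -/
def IsConvexBody {n : ℕ} (K : Set (E n)) : Prop :=
  IsCompact K ∧ Convex ℝ K ∧ (interior K).Nonempty

/-- The Steiner symmetral of `K` in direction `u`: over each point of `u^⊥` the fiber
`K_y` is replaced by `(K_y + (-K_y))/2`. -/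
def steiner {n : ℕ} (u : E n) (K : Set (E n)) : Set (E n) :=
  {x | ∃ s t : ℝ, (x - ⟪x, u⟫_ℝ • u + s • u) ∈ K ∧ (x - ⟪x, u⟫_ℝ • u + t • u) ∈ K ∧
    ⟪x, u⟫_ℝ = (s - t) / 2}

/-- The geometric mean body `K^{1/2} L^{1/2}`. -/
def geomMean {n : ℕ} (K L : Set (E n)) : Set (E n) :=
  {z | ∃ x ∈ K, ∃ y ∈ L, ∀ i, |z i| = |x i| ^ ((1 : ℝ) / 2) * |y i| ^ ((1 : ℝ) / 2)}

/-!
Write a point of `S_u K` as `x = y + ((s - t)/2) u` with `y ⊥ u` and `y + s u, y + t u ∈ K`.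
If `a, b ⊥ u` with `a + c u, b - c u ∈ K°`, then adding `⟨y + s u, a + c u⟩ ≤ 1` and
`⟨y + t u, b - c u⟩ ≤ 1` gives exactly `2 ⟨x, (a + b)/2 + c u⟩ ≤ 2`.
-/

section InnerProductSpace

variable {F : Type*} [NormedAddCommGroup F] [InnerProductSpace ℝ F] {u : F}

theorem inner_sub_inner_smul_self_eq_zero (hu : ‖u‖ = 1) (x : F) :
    ⟪x - ⟪x, u⟫_ℝ • u, u⟫_ℝ = 0 := by
  rw [inner_sub_left, real_inner_smul_left, real_inner_self_eq_norm_sq, hu]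
  ring

theorem inner_add_smul_add_smul_of_inner_eq_zero (hu : ‖u‖ = 1) {y w : F}
    (hy : ⟪y, u⟫_ℝ = 0) (hw : ⟪w, u⟫_ℝ = 0) (s c : ℝ) :
    ⟪y + s • u, w + c • u⟫_ℝ = ⟪y, w⟫_ℝ + s * c := by
  rw [real_inner_comm] at hw
  simp only [inner_add_left, inner_add_right, real_inner_smul_left, real_inner_smul_right,
    real_inner_self_eq_norm_sq, hu, hy, hw]
  ring

theorem inner_smul_add_eq_zero_of_inner_eq_zero {a b : F} (ha : ⟪a, u⟫_ℝ = 0)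
    (hb : ⟪b, u⟫_ℝ = 0) (r : ℝ) : ⟪r • (a + b), u⟫_ℝ = 0 := by
  rw [real_inner_smul_left, inner_add_left, ha, hb, add_zero, mul_zero]

end InnerProductSpace

theorem midpoint_add_smul_mem_polarBody_steiner {n : ℕ} {K : Set (E n)} {u : E n}
    (hu : ‖u‖ = 1) {a b : E n} (ha : ⟪a, u⟫_ℝ = 0) (hb : ⟪b, u⟫_ℝ = 0) {c : ℝ}
    (haK : a + c • u ∈ polarBody K) (hbK : b - c • u ∈ polarBody K) :
    (2⁻¹ : ℝ) • (a + b) + c • u ∈ polarBody (steiner u K) := by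
  rintro x ⟨s, t, hs, ht, hst⟩
  set y := x - ⟪x, u⟫_ℝ • u
  have hy : ⟪y, u⟫_ℝ = 0 := inner_sub_inner_smul_self_eq_zero hu x
  have hab := inner_smul_add_eq_zero_of_inner_eq_zero ha hb (2⁻¹ : ℝ)
  have h₁ : ⟪y, a⟫_ℝ + s * c ≤ 1 := by
    rw [← inner_add_smul_add_smul_of_inner_eq_zero hu hy ha]
    exact haK _ hs
  have h₂ : ⟪y, b⟫_ℝ + t * -c ≤ 1 := by
    rw [← inner_add_smul_add_smul_of_inner_eq_zero hu hy hb, neg_smul, ← sub_eq_add_neg]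
    exact hbK _ ht
  rw [← sub_add_cancel x (⟪x, u⟫_ℝ • u), inner_add_smul_add_smul_of_inner_eq_zero hu hy hab,
    real_inner_smul_right, inner_add_right, hst]
  linarith

theorem blaschke_santalo_stmt_general (n : ℕ) (K : Set (E n)) (u : E n) (hu : ‖u‖ = 1) (c : ℝ)
    (z : E n) (hz : z = c • u) :
    (2⁻¹ : ℝ) • ({w : E n | ⟪w, u⟫_ℝ = 0 ∧ w + z ∈ polarBody K} +
        {w : E n | ⟪w, u⟫_ℝ = 0 ∧ w - z ∈ polarBody K}) ⊆
      {w : E n | ⟪w, u⟫_ℝ = 0 ∧ w + z ∈ polarBody (steiner u K)} := by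
  rintro _ ⟨_, ⟨a, ⟨ha, haK⟩, b, ⟨hb, hbK⟩, rfl⟩, rfl⟩
  subst hz
  exact ⟨inner_smul_add_eq_zero_of_inner_eq_zero ha hb _,
    midpoint_add_smul_mem_polarBody_steiner hu ha hb haK hbK⟩

theorem blaschke_santalo_stmt (n : ℕ) (K : Set (E n)) (hK : IsConvexBody K)
    (hsym : K = -K) (u : E n) (hu : ‖u‖ = 1) (c : ℝ) (z : E n) (hz : z = c • u) :
    (2⁻¹ : ℝ) • ({w : E n | ⟪w, u⟫_ℝ = 0 ∧ w + z ∈ polarBody K} +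
        {w : E n | ⟪w, u⟫_ℝ = 0 ∧ w - z ∈ polarBody K}) ⊆
      {w : E n | ⟪w, u⟫_ℝ = 0 ∧ w + z ∈ polarBody (steiner u K)} :=
  blaschke_santalo_stmt_general n K u hu c z hz
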